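/- (Hardy-type inequality with exponential weight.) Let p > 1, a > 0, and let f : [0,∞) → ℝ be C¹ with ∫_0^∞ |f'(r)|^p e^{ar} dr < ∞ and lim_{r→∞} f(r) = 0. Then ∫_0^∞ |f(r)|^p e^{ar} dr ≤ (p/a)^p ∫_0^∞ |f'(r)|^p e^{ar} dr. -/

import Mathlib

/-!
Since `f → 0` at infinity, `|f r| ≤ ∫_r^∞ |f'|`, so it suffices to bound the tail operator
`u ↦ ∫_r^∞ u` on nonnegative functions; working with lower integrals, no integrability of `f'`
is needed. Hölder's inequality with the weight `e^{cs}`, `c = a (p - 1) / p`, gives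
`(∫_r^∞ u)^p ≤ (p/a)^{p-1} e^{-cr} ∫_r^∞ u^p e^{cs}`. Multiplying by `e^{ar}`, integrating in `r`
and exchanging the order of integration, the inner integral `∫_{r<s} e^{ar/p} dr ≤ (p/a) e^{as/p}`
supplies the last factor `p/a`.
-/

open MeasureTheory Real Set Filter
open scoped ENNReal

theorem enorm_le_lintegral_Ioi_enorm_deriv {E : Type*} [NormedAddCommGroup E] [NormedSpace ℝ E]
    {f : ℝ → E} {r : ℝ} (hf : ContDiffOn ℝ 1 f (Ici r)) (hlim : Tendsto f atTop (nhds 0)) :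
    ‖f r‖ₑ ≤ ∫⁻ x in Ioi r, ‖deriv f x‖ₑ := by
  have hdiff : ∀ᶠ T in atTop, ‖f T - f r‖ₑ ≤ ∫⁻ x in Ioi r, ‖deriv f x‖ₑ := by
    filter_upwards [eventually_ge_atTop r] with T hT
    calc ‖f T - f r‖ₑ ≤ ∫⁻ x in Icc r T, ‖deriv f x‖ₑ :=
          enorm_sub_le_lintegral_deriv_of_contDiffOn_Icc (hf.mono Icc_subset_Ici_self) hT
      _ ≤ ∫⁻ x in Ici r, ‖deriv f x‖ₑ := lintegral_mono_set Icc_subset_Ici_self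
      _ = ∫⁻ x in Ioi r, ‖deriv f x‖ₑ := by rw [restrict_Ioi_eq_restrict_Ici]
  have hconv : Tendsto (fun T => ‖f T - f r‖ₑ) atTop (nhds ‖f r‖ₑ) := by
    simpa using (hlim.sub_const (f r)).enorm
  exact le_of_tendsto hconv hdiff

theorem lintegral_Ioi_exp_neg_mul {b : ℝ} (hb : 0 < b) (r : ℝ) :
    ∫⁻ s in Ioi r, ENNReal.ofReal (exp (-(b * s))) = ENNReal.ofReal (exp (-(b * r)) / b) := by
  have h := integral_exp_mul_Ioi (neg_neg_of_pos hb) r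
  simp only [neg_mul, neg_div_neg_eq] at h
  have hint : IntegrableOn (fun s => exp (-(b * s))) (Ioi r) := by
    simpa using integrableOn_exp_mul_Ioi (neg_neg_of_pos hb) r
  rw [← h, ofReal_integral_eq_lintegral_ofReal hint (ae_of_all _ fun _ => (exp_pos _).le)]

theorem lintegral_Iio_exp_mul {b : ℝ} (hb : 0 < b) (s : ℝ) :
    ∫⁻ r in Iio s, ENNReal.ofReal (exp (b * r)) = ENNReal.ofReal (exp (b * s) / b) := by
  rw [restrict_Iio_eq_restrict_Iic, ← integral_exp_mul_Iic hb s,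
    ofReal_integral_eq_lintegral_ofReal (integrableOn_exp_mul_Iic hb s)
      (ae_of_all _ fun _ => (exp_pos _).le)]

theorem rpow_lintegral_Ioi_le {p c r : ℝ} (hp : 1 < p) (hc : 0 < c) {u : ℝ → ℝ≥0∞}
    (hu : AEMeasurable u (volume.restrict (Ioi r))) :
    (∫⁻ s in Ioi r, u s) ^ p ≤ ENNReal.ofReal (((p - 1) / c) ^ (p - 1) * exp (-(c * r))) *
      ∫⁻ s in Ioi r, u s ^ p * ENNReal.ofReal (exp (c * s)) := by
  set q := p.conjExponent
  have hpq : p.HolderConjugate q := .conjExponent hp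
  have hp0 : 0 < p := hpq.pos
  have hp1 : 0 < p - 1 := sub_pos.2 hp
  set w : ℝ → ℝ≥0∞ := fun s => ENNReal.ofReal (exp (c * s / p))
  set w' : ℝ → ℝ≥0∞ := fun s => ENNReal.ofReal (exp (-(c * s / p)))
  have hsplit : ∀ s, u s = (u s * w s) * w' s := fun s => by
    rw [mul_assoc, ← ENNReal.ofReal_mul (exp_pos _).le, ← exp_add, add_neg_cancel, exp_zero,
      ENNReal.ofReal_one, mul_one]
  have hw : ∀ s, (u s * w s) ^ p = u s ^ p * ENNReal.ofReal (exp (c * s)) := fun s => by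
    rw [ENNReal.mul_rpow_of_nonneg _ _ hp0.le, ENNReal.ofReal_rpow_of_nonneg (exp_pos _).le hp0.le,
      ← exp_mul, div_mul_cancel₀ _ hp0.ne']
  have hw' : ∀ s, w' s ^ q = ENNReal.ofReal (exp (-(c / (p - 1) * s))) := fun s => by
    rw [ENNReal.ofReal_rpow_of_nonneg (exp_pos _).le hpq.symm.nonneg, ← exp_mul]
    congr 2
    simp only [q, Real.conjExponent]
    field_simp
  have hholder := ENNReal.lintegral_mul_le_Lp_mul_Lq _ hpq (f := fun s => u s * w s) (g := w')
    (hu.mul (by fun_prop)) (by fun_prop)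
  simp only [Pi.mul_apply, ← hsplit, hw, hw'] at hholder
  rw [lintegral_Ioi_exp_neg_mul (div_pos hc hp1)] at hholder
  have hexp : ENNReal.ofReal (exp (-(c / (p - 1) * r)) / (c / (p - 1))) ^ (p - 1) =
      ENNReal.ofReal (((p - 1) / c) ^ (p - 1) * exp (-(c * r))) := by
    rw [ENNReal.ofReal_rpow_of_nonneg (by positivity) hp1.le, div_eq_mul_inv, inv_div,
      mul_rpow (exp_pos _).le (by positivity), ← exp_mul, mul_comm]
    congr 3
    field_simp
  have hq : 1 / q * p = p - 1 := by
    simp only [q, Real.conjExponent]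
    field_simp
  calc (∫⁻ s in Ioi r, u s) ^ p
      ≤ ((∫⁻ s in Ioi r, u s ^ p * ENNReal.ofReal (exp (c * s))) ^ (1 / p) *
          ENNReal.ofReal (exp (-(c / (p - 1) * r)) / (c / (p - 1))) ^ (1 / q)) ^ p :=
        ENNReal.rpow_le_rpow hholder hp0.le
    _ = _ := by
      rw [ENNReal.mul_rpow_of_nonneg _ _ hp0.le, ← ENNReal.rpow_mul, ← ENNReal.rpow_mul, hq,
        one_div_mul_cancel hp0.ne', ENNReal.rpow_one, hexp, mul_comm]

theorem lintegral_exp_mul_lintegral_Ioi_le {b x₀ : ℝ} (hb : 0 < b) {φ : ℝ → ℝ≥0∞}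
    (hφ : AEMeasurable φ (volume.restrict (Ioi x₀))) :
    ∫⁻ r in Ioi x₀, ENNReal.ofReal (exp (b * r)) * ∫⁻ s in Ioi r, φ s ≤
      ENNReal.ofReal b⁻¹ * ∫⁻ s in Ioi x₀, ENNReal.ofReal (exp (b * s)) * φ s := by
  set F : ℝ → ℝ → ℝ≥0∞ := fun r s =>
    (Ioi r).indicator (fun s => ENNReal.ofReal (exp (b * r)) * φ s) s
  have hF : AEMeasurable (Function.uncurry F)
      ((volume.restrict (Ioi x₀)).prod (volume.restrict (Ioi x₀))) := by
    change AEMeasurable ({z : ℝ × ℝ | z.1 < z.2}.indicator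
      fun z => ENNReal.ofReal (exp (b * z.1)) * φ z.2) _
    refine AEMeasurable.indicator ?_ (measurableSet_lt measurable_fst measurable_snd)
    have hexp : Measurable fun z : ℝ × ℝ => ENNReal.ofReal (exp (b * z.1)) := by fun_prop
    exact hexp.aemeasurable.mul hφ.comp_snd
  have hinner : ∀ r ∈ Ioi x₀, ENNReal.ofReal (exp (b * r)) * ∫⁻ s in Ioi r, φ s =
      ∫⁻ s in Ioi x₀, F r s := fun r hr => by
    rw [setLIntegral_indicator measurableSet_Ioi, Ioi_inter_Ioi, max_eq_left (le_of_lt hr),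
      lintegral_const_mul' _ _ ENNReal.ofReal_ne_top]
  have hswap : ∀ s, ∫⁻ r in Ioi x₀, F r s ≤ ENNReal.ofReal (exp (b * s) / b) * φ s := fun s => by
    calc ∫⁻ r in Ioi x₀, F r s ≤ ∫⁻ r, F r s := setLIntegral_le_lintegral _ _
      _ = ∫⁻ r, (Iio s).indicator (fun r => ENNReal.ofReal (exp (b * r)) * φ s) r := by
          simp only [F, indicator_apply, mem_Ioi, mem_Iio]
      _ = ENNReal.ofReal (exp (b * s) / b) * φ s := by
          rw [lintegral_indicator measurableSet_Iio, lintegral_mul_const _ (by fun_prop),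
            lintegral_Iio_exp_mul hb]
  calc ∫⁻ r in Ioi x₀, ENNReal.ofReal (exp (b * r)) * ∫⁻ s in Ioi r, φ s
      = ∫⁻ r in Ioi x₀, ∫⁻ s in Ioi x₀, F r s := setLIntegral_congr_fun measurableSet_Ioi hinner
    _ = ∫⁻ s in Ioi x₀, ∫⁻ r in Ioi x₀, F r s := lintegral_lintegral_swap hF
    _ ≤ ∫⁻ s in Ioi x₀, ENNReal.ofReal b⁻¹ * (ENNReal.ofReal (exp (b * s)) * φ s) := by
        refine lintegral_mono fun s => (hswap s).trans_eq ?_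
        rw [← mul_assoc, ← ENNReal.ofReal_mul (inv_pos.2 hb).le, inv_mul_eq_div]
    _ = _ := lintegral_const_mul' _ _ ENNReal.ofReal_ne_top

theorem lintegral_rpow_lintegral_Ioi_mul_exp_le {p a x₀ : ℝ} (hp : 1 < p) (ha : 0 < a)
    {u : ℝ → ℝ≥0∞} (hu : AEMeasurable u (volume.restrict (Ioi x₀))) :
    ∫⁻ r in Ioi x₀, (∫⁻ s in Ioi r, u s) ^ p * ENNReal.ofReal (exp (a * r)) ≤
      ENNReal.ofReal ((p / a) ^ p) * ∫⁻ s in Ioi x₀, u s ^ p * ENNReal.ofReal (exp (a * s)) := by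
  have hp0 : 0 < p := by linarith
  set c := a * (p - 1) / p with hc_def
  have hc : 0 < c := by positivity
  have hK : (p - 1) / c = p / a := by
    have : p - 1 ≠ 0 := sub_ne_zero.2 hp.ne'
    rw [hc_def]; field_simp
  have hexp : ∀ r, exp (-(c * r)) * exp (a * r) = exp (a / p * r) := fun r => by
    rw [← exp_add, hc_def]; congr 1; field_simp; ring
  have hexp' : ∀ s, exp (a / p * s) * exp (c * s) = exp (a * s) := fun s => by
    rw [← exp_add, hc_def]; congr 1; field_simp; ring
  have hφ : AEMeasurable (fun s => u s ^ p * ENNReal.ofReal (exp (c * s)))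
      (volume.restrict (Ioi x₀)) := (hu.pow_const p).mul (by fun_prop)
  calc ∫⁻ r in Ioi x₀, (∫⁻ s in Ioi r, u s) ^ p * ENNReal.ofReal (exp (a * r))
      ≤ ∫⁻ r in Ioi x₀, ENNReal.ofReal ((p / a) ^ (p - 1)) * (ENNReal.ofReal (exp (a / p * r)) *
          ∫⁻ s in Ioi r, u s ^ p * ENNReal.ofReal (exp (c * s))) := by
        refine setLIntegral_mono' measurableSet_Ioi fun r hr => ?_
        have hur : AEMeasurable u (volume.restrict (Ioi r)) :=
          hu.mono_measure (Measure.restrict_mono (Ioi_subset_Ioi (le_of_lt hr)) le_rfl)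
        calc (∫⁻ s in Ioi r, u s) ^ p * ENNReal.ofReal (exp (a * r))
            ≤ ENNReal.ofReal (((p - 1) / c) ^ (p - 1) * exp (-(c * r))) *
                (∫⁻ s in Ioi r, u s ^ p * ENNReal.ofReal (exp (c * s))) *
                  ENNReal.ofReal (exp (a * r)) := by
              gcongr
              exact rpow_lintegral_Ioi_le hp hc hur
          _ = _ := by
              rw [hK, mul_right_comm, ← ENNReal.ofReal_mul (by positivity), mul_assoc, hexp,
                ENNReal.ofReal_mul (by positivity), mul_assoc]
    _ = ENNReal.ofReal ((p / a) ^ (p - 1)) * ∫⁻ r in Ioi x₀, ENNReal.ofReal (exp (a / p * r)) *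
          ∫⁻ s in Ioi r, u s ^ p * ENNReal.ofReal (exp (c * s)) :=
        lintegral_const_mul' _ _ ENNReal.ofReal_ne_top
    _ ≤ ENNReal.ofReal ((p / a) ^ (p - 1)) * (ENNReal.ofReal (a / p)⁻¹ *
          ∫⁻ s in Ioi x₀, ENNReal.ofReal (exp (a / p * s)) *
            (u s ^ p * ENNReal.ofReal (exp (c * s)))) := by
        gcongr
        exact lintegral_exp_mul_lintegral_Ioi_le (by positivity) hφ
    _ = _ := by
        rw [← mul_assoc, ← ENNReal.ofReal_mul (by positivity), inv_div,
          ← rpow_add_one (div_pos hp0 ha).ne', sub_add_cancel]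
        congr 1
        refine lintegral_congr fun s => ?_
        rw [mul_left_comm, ← ENNReal.ofReal_mul (exp_pos _).le, hexp']

theorem hardy_inequality_exponential_weight_general
    (f : ℝ → ℝ) (hf : ContDiffOn ℝ 1 f (Set.Ici 0))
    (p a : ℝ) (hp : 1 < p) (ha : 0 < a)
    (hlim : Tendsto f atTop (nhds 0)) :
    ∫⁻ r in Set.Ici (0 : ℝ), ENNReal.ofReal (|f r| ^ p * Real.exp (a * r)) ≤
      ENNReal.ofReal ((p / a) ^ p) *
        ∫⁻ r in Set.Ici (0 : ℝ),
          ENNReal.ofReal (|derivWithin f (Set.Ici 0) r| ^ p * Real.exp (a * r)) := by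
  set g := derivWithin f (Ici 0)
  have hp0 : 0 ≤ p := by linarith
  have hofReal : ∀ x r, ENNReal.ofReal (|x| ^ p * exp (a * r)) =
      ‖x‖ₑ ^ p * ENNReal.ofReal (exp (a * r)) := fun x r => by
    rw [ENNReal.ofReal_mul (by positivity), ← ENNReal.ofReal_rpow_of_nonneg (abs_nonneg _) hp0,
      Real.enorm_eq_ofReal_abs]
  have hg : AEMeasurable (fun s => ‖g s‖ₑ) (volume.restrict (Ioi 0)) :=
    (((hf.continuousOn_derivWithin (uniqueDiffOn_Ici 0) le_rfl).mono
      Ioi_subset_Ici_self).aemeasurable measurableSet_Ioi).enorm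
  have hf_le : ∀ r ∈ Ioi (0 : ℝ), ‖f r‖ₑ ≤ ∫⁻ s in Ioi r, ‖g s‖ₑ := fun r hr => by
    refine (enorm_le_lintegral_Ioi_enorm_deriv (hf.mono (Ici_subset_Ici.2 hr.le)) hlim).trans_eq
      (setLIntegral_congr_fun measurableSet_Ioi fun s hs => ?_)
    rw [← derivWithin_of_mem_nhds (Ici_mem_nhds (hr.trans hs))]
  simp only [← restrict_Ioi_eq_restrict_Ici, hofReal]
  calc ∫⁻ r in Ioi 0, ‖f r‖ₑ ^ p * ENNReal.ofReal (exp (a * r))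
      ≤ ∫⁻ r in Ioi 0, (∫⁻ s in Ioi r, ‖g s‖ₑ) ^ p * ENNReal.ofReal (exp (a * r)) :=
        setLIntegral_mono' measurableSet_Ioi fun r hr => by gcongr; exact hf_le r hr
    _ ≤ _ := lintegral_rpow_lintegral_Ioi_mul_exp_le hp ha hg

/-- Hardy-type inequality with exponential weight: for `p > 1`, `a > 0`
and `f : [0,∞) → ℝ` of class `C¹` with `∫_0^∞ |f'(r)|^p e^{ar} dr < ∞` and
`f(r) → 0` as `r → ∞`, one has
`∫_0^∞ |f(r)|^p e^{ar} dr ≤ (p/a)^p ∫_0^∞ |f'(r)|^p e^{ar} dr`.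
(Stated with lower integrals in `ℝ≥0∞` so that no integrability of the left-hand
side needs to be assumed.) -/
theorem hardy_inequality_exponential_weight
    (f : ℝ → ℝ) (hf : ContDiffOn ℝ 1 f (Set.Ici 0))
    (p a : ℝ) (hp : 1 < p) (ha : 0 < a)
    (hint : IntegrableOn
      (fun r : ℝ => |derivWithin f (Set.Ici 0) r| ^ p * Real.exp (a * r))
      (Set.Ici (0 : ℝ)) volume)
    (hlim : Tendsto f atTop (nhds 0)) :
    ∫⁻ r in Set.Ici (0 : ℝ), ENNReal.ofReal (|f r| ^ p * Real.exp (a * r)) ≤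
      ENNReal.ofReal ((p / a) ^ p) *
        ∫⁻ r in Set.Ici (0 : ℝ),
          ENNReal.ofReal (|derivWithin f (Set.Ici 0) r| ^ p * Real.exp (a * r)) :=
  hardy_inequality_exponential_weight_general f hf p a hp ha hlim
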